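/- The free product Z/2Z * Z/3Z is isomorphic to PSL₂(Z). -/

import Mathlib

/-!
Sending the generators to `[S]` and `[ST]` defines a homomorphism because `S² = (ST)³ = -1`
is central. It is surjective because `S` and `T = S⁻¹ (ST)` generate `SL(2, ℤ)`. It is
injective by the ping-pong lemma for the Möbius action on `ℙ¹(ℝ)`: `S : x ↦ -1/x` maps the
negative reals to the positive ones, while `ST : x ↦ -1/(x+1)` maps `(0, ∞)` into `(-1, 0)`
and `(-1, ∞)` into `(-∞, 0)`, so that both `ST` and `(ST)²` map the positive reals to the
negative ones.
-/

open Matrix ModularGroup Set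
open scoped MatrixGroups Pointwise

universe u

namespace Monoid

variable {M N : Type u} [Group M] [Group N]

instance instGroupCond (b : Bool) : Group (cond b M N) :=
  Bool.rec (motive := fun b => Group (cond b M N)) ‹_› ‹_› b

def coprodEquivCoprodI : Coprod M N ≃* CoprodI (fun b => cond b M N) :=
  MonoidHom.toMulEquiv
    (Coprod.lift (CoprodI.of (M := fun b => cond b M N) (i := true))
      (CoprodI.of (M := fun b => cond b M N) (i := false)))
    (CoprodI.lift fun b =>
      Bool.rec (motive := fun b => cond b M N →* Coprod M N) Coprod.inr Coprod.inl b)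
    (Coprod.hom_ext (by ext; simp) (by ext; simp))
    (CoprodI.ext_hom _ _ fun b => by cases b <;> ext <;> simp)

theorem Coprod.lift_injective_of_ping_pong {G α : Type*} [Group G] [MulAction G α]
    (f : M →* G) (g : N →* G) (hcard : 3 ≤ Cardinal.mk M ∨ 3 ≤ Cardinal.mk N)
    (X Y : Set α) (hX : X.Nonempty) (hY : Y.Nonempty) (hXY : Disjoint X Y)
    (hf : ∀ m ≠ 1, f m • Y ⊆ X) (hg : ∀ n ≠ 1, g n • X ⊆ Y) :
    Function.Injective (Coprod.lift f g) := by
  set F : ∀ b, cond b M N →* G := fun b => Bool.rec (motive := fun b => cond b M N →* G) g f b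
  have hlift : Coprod.lift f g = (CoprodI.lift F).comp coprodEquivCoprodI.toMonoidHom :=
    Coprod.hom_ext (by ext; simp [coprodEquivCoprodI, F]) (by ext; simp [coprodEquivCoprodI, F])
  rw [hlift]
  refine (CoprodI.lift_injective_of_ping_pong F ?_ (fun b => cond b X Y) ?_ ?_ ?_).comp
    coprodEquivCoprodI.injective
  · exact Or.inr (hcard.elim (⟨true, ·⟩) (⟨false, ·⟩))
  · rintro (_ | _) <;> assumption
  · rintro (_ | _) (_ | _) h <;> first | exact absurd rfl h | exact hXY | exact hXY.symm
  · rintro (_ | _) (_ | _) h <;> first | exact absurd rfl h | exact hf | exact hg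

end Monoid

def ZMod.mulLift {G : Type*} [Group G] {n : ℕ} (g : G) (hg : g ^ n = 1) :
    Multiplicative (ZMod n) →* G :=
  (ZMod.lift n ⟨zmultiplesHom (Additive G) (.ofMul g), by
    simpa [← ofMul_zpow] using congrArg Additive.ofMul hg⟩).toMultiplicativeLeft

@[simp]
theorem ZMod.mulLift_ofAdd_intCast {G : Type*} [Group G] {n : ℕ} (g : G) (hg : g ^ n = 1)
    (k : ℤ) : ZMod.mulLift g hg (.ofAdd (k : ZMod n)) = g ^ k := by
  simp [ZMod.mulLift]

@[simp]
theorem ZMod.mulLift_ofAdd_one {G : Type*} [Group G] {n : ℕ} (g : G) (hg : g ^ n = 1) :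
    ZMod.mulLift g hg (.ofAdd 1) = g := by
  simpa using ZMod.mulLift_ofAdd_intCast g hg 1

theorem OnePoint.smul_eq_self_of_coe_eq_scalar {K : Type*} [Field K] [DecidableEq K]
    {g : GL (Fin 2) K} {r : K} (hg : (g : Matrix (Fin 2) (Fin 2) K) = scalar (Fin 2) r)
    (x : OnePoint K) : g • x = x := by
  have hr : r ≠ 0 := by
    have := g.det_ne_zero
    simp_all
  cases x with
  | infty => simp [OnePoint.smul_infty_eq_ite, hg]
  | coe k => simp [OnePoint.smul_some_eq_ite, hg, hr]

namespace ModularGroup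

theorem S_sq : S ^ 2 = -1 := by decide

theorem S_mul_T_pow_three : (S * T) ^ 3 = -1 := by decide

theorem mk_neg_one_eq_one : (QuotientGroup.mk (-1 : SL(2,ℤ)) : PSL(2,ℤ)) = 1 :=
  (QuotientGroup.eq_one_iff _).mpr (Subgroup.mem_center_iff.mpr fun g => by simp)

theorem closure_mk_S_mk_T_eq_top :
    Subgroup.closure {(QuotientGroup.mk S : PSL(2,ℤ)), QuotientGroup.mk T} = ⊤ := by
  have h := congrArg (Subgroup.map (QuotientGroup.mk' (Subgroup.center SL(2,ℤ))))
    SpecialLinearGroup.SL2Z_generators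
  rwa [MonoidHom.map_closure, Set.image_pair,
    Subgroup.map_top_of_surjective _ (QuotientGroup.mk'_surjective _)] at h

theorem center_le_ker_toPermHom_mapGL :
    Subgroup.center SL(2,ℤ) ≤
      ((MulAction.toPermHom (GL (Fin 2) ℝ) (OnePoint ℝ)).comp
        (SpecialLinearGroup.mapGL ℝ)).ker := by
  intro A hA
  rw [MonoidHom.mem_ker]
  ext x
  refine OnePoint.smul_eq_self_of_coe_eq_scalar (r := (A 0 0 : ℝ)) ?_ x
  ext i j
  have hAij := congrFun₂ (SpecialLinearGroup.scalar_eq_self_of_mem_center hA 0) i j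
  simp only [SpecialLinearGroup.mapGL_coe_matrix, SpecialLinearGroup.map_apply_coe,
    RingHom.mapMatrix_apply, map_apply, ← hAij]
  simp only [scalar_apply, diagonal_apply]
  split_ifs <;> simp

noncomputable def moebiusPerm : PSL(2,ℤ) →* Equiv.Perm (OnePoint ℝ) :=
  QuotientGroup.lift _ _ center_le_ker_toPermHom_mapGL

theorem moebiusPerm_mk_coe (A : SL(2,ℤ)) {x : ℝ} (hx : (A 1 0 : ℝ) * x + A 1 1 ≠ 0) :
    moebiusPerm (QuotientGroup.mk A) x = ((A 0 0 * x + A 0 1) / (A 1 0 * x + A 1 1) : ℝ) := by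
  rw [moebiusPerm, QuotientGroup.lift_mk]
  simp [OnePoint.smul_some_eq_ite, hx]

theorem moebiusPerm_S_coe {x : ℝ} (hx : x ≠ 0) :
    moebiusPerm (QuotientGroup.mk S) x = ((-x⁻¹ : ℝ) : OnePoint ℝ) := by
  rw [moebiusPerm_mk_coe] <;> simp [coe_S, hx, div_eq_mul_inv]

theorem moebiusPerm_S_mul_T_coe {x : ℝ} (hx : x + 1 ≠ 0) :
    moebiusPerm (QuotientGroup.mk (S * T)) x = ((-(x + 1)⁻¹ : ℝ) : OnePoint ℝ) := by
  rw [moebiusPerm_mk_coe] <;> simp [hx, div_eq_mul_inv, add_comm]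

theorem moebiusPerm_S_smul_Iio_subset :
    moebiusPerm (QuotientGroup.mk S) • ((↑) '' Iio (0 : ℝ) : Set (OnePoint ℝ)) ⊆
      (↑) '' Ioi (0 : ℝ) := by
  rintro _ ⟨_, ⟨x, hx : x < 0, rfl⟩, rfl⟩
  exact ⟨-x⁻¹, by simpa using hx, (moebiusPerm_S_coe hx.ne).symm⟩

theorem moebiusPerm_S_mul_T_smul_Ioi_neg_one_subset :
    moebiusPerm (QuotientGroup.mk (S * T)) • ((↑) '' Ioi (-1 : ℝ) : Set (OnePoint ℝ)) ⊆
      (↑) '' Iio (0 : ℝ) := by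
  rintro _ ⟨_, ⟨x, hx : -1 < x, rfl⟩, rfl⟩
  have hx1 : 0 < x + 1 := by linarith
  exact ⟨-(x + 1)⁻¹, by simpa using hx1, (moebiusPerm_S_mul_T_coe hx1.ne').symm⟩

theorem moebiusPerm_S_mul_T_smul_Ioi_zero_subset :
    moebiusPerm (QuotientGroup.mk (S * T)) • ((↑) '' Ioi (0 : ℝ) : Set (OnePoint ℝ)) ⊆
      (↑) '' Ioi (-1 : ℝ) := by
  rintro _ ⟨_, ⟨x, hx : 0 < x, rfl⟩, rfl⟩
  have hx1 : 1 < x + 1 := by linarith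
  refine ⟨-(x + 1)⁻¹, ?_, (moebiusPerm_S_mul_T_coe (by positivity)).symm⟩
  simpa using inv_lt_one_of_one_lt₀ hx1

noncomputable def freeProductHom :
    Monoid.Coprod (Multiplicative (ZMod 2)) (Multiplicative (ZMod 3)) →* PSL(2,ℤ) :=
  Monoid.Coprod.lift
    (ZMod.mulLift (QuotientGroup.mk S) (by rw [← QuotientGroup.mk_pow, S_sq, mk_neg_one_eq_one]))
    (ZMod.mulLift (QuotientGroup.mk (S * T))
      (by rw [← QuotientGroup.mk_pow, S_mul_T_pow_three, mk_neg_one_eq_one]))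

theorem freeProductHom_inl_ofAdd_one :
    freeProductHom (.inl (.ofAdd 1)) = QuotientGroup.mk S := by
  simp [freeProductHom]

theorem freeProductHom_inr_ofAdd_one :
    freeProductHom (.inr (.ofAdd 1)) = QuotientGroup.mk (S * T) := by
  simp [freeProductHom]

theorem freeProductHom_injective : Function.Injective freeProductHom := by
  refine Function.Injective.of_comp (f := moebiusPerm) ?_
  rw [← MonoidHom.coe_comp, freeProductHom, Monoid.Coprod.comp_lift]
  refine Monoid.Coprod.lift_injective_of_ping_pong _ _ (.inr (by simp))
    ((↑) '' Ioi (0 : ℝ) : Set (OnePoint ℝ)) ((↑) '' Iio (0 : ℝ))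
    ⟨_, 1, mem_Ioi.mpr one_pos, rfl⟩ ⟨_, -1, mem_Iio.mpr neg_one_lt_zero, rfl⟩
    ((disjoint_image_iff OnePoint.coe_injective).mpr Ioi_disjoint_Iio_same) ?_ ?_
  · intro m hm
    obtain rfl : m = .ofAdd 1 := by revert m; decide
    simpa using moebiusPerm_S_smul_Iio_subset
  · intro n hn
    obtain rfl | rfl : n = .ofAdd 1 ∨ n = .ofAdd ((2 : ℤ) : ZMod 3) := by
      revert n; decide
    · simpa using (smul_set_mono (image_mono (Ioi_subset_Ioi (by norm_num)))).trans
        moebiusPerm_S_mul_T_smul_Ioi_neg_one_subset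
    · rw [MonoidHom.comp_apply, ZMod.mulLift_ofAdd_intCast, zpow_ofNat, map_pow, pow_two,
        mul_smul]
      exact (smul_set_mono moebiusPerm_S_mul_T_smul_Ioi_zero_subset).trans
        moebiusPerm_S_mul_T_smul_Ioi_neg_one_subset

theorem freeProductHom_surjective : Function.Surjective freeProductHom := by
  rw [← MonoidHom.range_eq_top, eq_top_iff, ← closure_mk_S_mk_T_eq_top, Subgroup.closure_le]
  have hS : QuotientGroup.mk S ∈ freeProductHom.range := ⟨_, freeProductHom_inl_ofAdd_one⟩
  have hST : QuotientGroup.mk (S * T) ∈ freeProductHom.range :=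
    ⟨_, freeProductHom_inr_ofAdd_one⟩
  rintro _ (rfl | rfl)
  · exact hS
  · simpa [QuotientGroup.mk_mul] using mul_mem (inv_mem hS) hST

end ModularGroup

/-- The free product `ℤ/2ℤ * ℤ/3ℤ` is isomorphic to `PSL₂(ℤ)`, via an
isomorphism sending the order-2 generator to the class of `S = [[0,-1],[1,0]]` and the
order-3 generator to the class of `S*T`, where `T = [[1,1],[0,1]]`. -/
theorem stmt4 :
    ∃ φ : Monoid.Coprod (Multiplicative (ZMod 2)) (Multiplicative (ZMod 3)) ≃*
        Matrix.ProjectiveSpecialLinearGroup (Fin 2) ℤ,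
      φ (Monoid.Coprod.inl (Multiplicative.ofAdd (1 : ZMod 2))) =
        (QuotientGroup.mk ModularGroup.S : Matrix.ProjectiveSpecialLinearGroup (Fin 2) ℤ) ∧
      φ (Monoid.Coprod.inr (Multiplicative.ofAdd (1 : ZMod 3))) =
        (QuotientGroup.mk (ModularGroup.S * ModularGroup.T) :
          Matrix.ProjectiveSpecialLinearGroup (Fin 2) ℤ) := by
  refine ⟨.ofBijective freeProductHom ⟨freeProductHom_injective, freeProductHom_surjective⟩,
    freeProductHom_inl_ofAdd_one, freeProductHom_inr_ofAdd_one⟩
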